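/- With u_k* as above (iterated convolutions of a potential density u satisfying u(t) ≤ C₂ t^{β−1}, U(t) ≤ C₁ t^β on [0,T], β ∈ (0,1)), for every λ > 0 the series Σ_{k=0}^∞ λ^k u_k*(t) converges uniformly (normally) on [0,T], with Σ_{k=0}^∞ λ^k u_k*(t) ≤ 1 + (C₁β/C₂)(E_β(λ C₂ Γ(β) t^β) − 1), where E_β(z) = Σ_{k≥0} z^k/Γ(βk+1) is the Mittag-Leffler function. -/

import Mathlib

open Set MeasureTheory Real Filter

/-!
By induction on `k ≥ 1`, `v k t ≤ (C₁β/C₂) (C₂Γ(β))^k t^(βk) / Γ(βk + 1)`: the case `k = 1` is the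
bound on `U`, and each further convolution with `u ≤ C₂ t^(β-1)` produces a Beta integral
`B(βk + 1, β) = Γ(βk + 1) Γ(β) / Γ(β(k + 1) + 1)`. So `λ^k v k t` is dominated by the coefficients
of the Mittag-Leffler series, which are summable by the ratio test because log-convexity of `Γ`
gives `Γ(x + 1 + β) ≥ Γ(x + 1) x^β`.
-/

theorem Real.Gamma_add_one_mul_rpow_le {y β : ℝ} (hy : 0 < y) (hβ : 0 < β) :
    Gamma (y + 1) * y ^ β ≤ Gamma (y + 1 + β) := by
  have hslope := convexOn_log_Gamma.slope_mono_adjacent (x := y) (y := y + 1) (z := y + 1 + β)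
    (mem_Ioi.2 hy) (mem_Ioi.2 (by linarith)) (by linarith) (by linarith)
  have hrec : log (Gamma (y + 1)) - log (Gamma y) = log y := by
    rw [Gamma_add_one hy.ne', log_mul hy.ne' (Gamma_pos_of_pos hy).ne']
    ring
  simp only [Function.comp_apply, hrec, add_sub_cancel_left, div_one,
    show y + 1 + β - (y + 1) = β by ring, le_div_iff₀ hβ] at hslope
  have hpos : 0 < Gamma (y + 1) := Gamma_pos_of_pos (by linarith)
  rw [← log_le_log_iff (by positivity) (Gamma_pos_of_pos (by linarith)),
    log_mul hpos.ne' (rpow_pos_of_pos hy β).ne', log_rpow hy]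
  linarith

noncomputable def mittagLefflerTerm (β z : ℝ) (k : ℕ) : ℝ := z ^ k / Gamma (β * k + 1)

theorem summable_mittagLefflerTerm {β : ℝ} (hβ : 0 < β) (z : ℝ) :
    Summable (mittagLefflerTerm β z) := by
  refine summable_of_ratio_norm_eventually_le (r := 1 / 2) (by norm_num) ?_
  have hgrowth : Tendsto (fun k : ℕ => (β * k) ^ β) atTop atTop :=
    (tendsto_rpow_atTop hβ).comp (tendsto_natCast_atTop_atTop.const_mul_atTop hβ)
  filter_upwards [hgrowth.eventually_ge_atTop (2 * ‖z‖), eventually_ge_atTop 1] with k hk hk1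
  have hβk : 0 < β * k := mul_pos hβ (by exact_mod_cast hk1)
  have hΓ : 0 < Gamma (β * k + 1) := Gamma_pos_of_pos (by linarith)
  have hΓ_succ : Gamma (β * k + 1) * (β * k) ^ β ≤ Gamma (β * ↑(k + 1) + 1) := by
    convert Gamma_add_one_mul_rpow_le hβk hβ using 2
    push_cast; ring
  have hpow : 0 < (β * k) ^ β := rpow_pos_of_pos hβk β
  simp only [mittagLefflerTerm, norm_div, norm_pow, norm_of_nonneg hΓ.le,
    norm_of_nonneg (Gamma_pos_of_pos (by positivity : 0 < β * ↑(k + 1) + 1)).le]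
  calc ‖z‖ ^ (k + 1) / Gamma (β * ↑(k + 1) + 1)
      ≤ ‖z‖ ^ (k + 1) / (Gamma (β * k + 1) * (β * k) ^ β) := by gcongr
    _ = ‖z‖ / (β * k) ^ β * (‖z‖ ^ k / Gamma (β * k + 1)) := by
      rw [pow_succ]; field_simp
    _ ≤ 1 / 2 * (‖z‖ ^ k / Gamma (β * k + 1)) := by
      gcongr ?_ * _
      rw [div_le_iff₀ hpow]
      linarith

theorem mittagLefflerTerm_mono {β z z' : ℝ} (hβ : 0 ≤ β) (hz : 0 ≤ z) (hzz' : z ≤ z') (k : ℕ) :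
    mittagLefflerTerm β z k ≤ mittagLefflerTerm β z' k := by
  have := Gamma_pos_of_pos (by positivity : 0 < β * k + 1)
  unfold mittagLefflerTerm
  gcongr

theorem pow_mul_le_mul_mittagLefflerTerm {β c A lam t x : ℝ} {k : ℕ} (hlam : 0 ≤ lam)
    (ht : 0 ≤ t) (hx : x ≤ c * A ^ k / Gamma (β * k + 1) * t ^ (β * k)) :
    lam ^ k * x ≤ c * mittagLefflerTerm β (lam * A * t ^ β) k := by
  refine (mul_le_mul_of_nonneg_left hx (pow_nonneg hlam k)).trans_eq ?_
  rw [mittagLefflerTerm, mul_pow, mul_pow, ← rpow_natCast (t ^ β), ← rpow_mul ht]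
  ring

theorem integral_rpow_mul_sub_rpow {p q t : ℝ} (hp : 0 < p) (hq : 0 < q) (ht : 0 < t) :
    ∫ s in (0:ℝ)..t, s ^ (p - 1) * (t - s) ^ (q - 1) =
      Gamma p * Gamma q / Gamma (p + q) * t ^ (p + q - 1) := by
  have hlhs : ∫ s in (0:ℝ)..t, (s : ℂ) ^ ((p : ℂ) - 1) * ((t : ℂ) - s) ^ ((q : ℂ) - 1) =
      ((∫ s in (0:ℝ)..t, s ^ (p - 1) * (t - s) ^ (q - 1) : ℝ) : ℂ) := by
    rw [← intervalIntegral.integral_ofReal]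
    refine intervalIntegral.integral_congr_ae (.of_forall fun s hs => ?_)
    rw [uIoc_of_le ht.le] at hs
    rw [Complex.ofReal_mul, Complex.ofReal_cpow hs.1.le, Complex.ofReal_cpow (sub_nonneg.2 hs.2)]
    push_cast; rfl
  have hrhs : (t : ℂ) ^ ((p : ℂ) + q - 1) * Complex.betaIntegral p q =
      ((Gamma p * Gamma q / Gamma (p + q) * t ^ (p + q - 1) : ℝ) : ℂ) := by
    rw [Complex.betaIntegral_eq_Gamma_mul_div _ _ (by simpa) (by simpa)]
    push_cast [Complex.ofReal_cpow ht.le, ← Complex.Gamma_ofReal]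
    ring
  exact_mod_cast hlhs.symm.trans ((Complex.betaIntegral_scaled p q ht).trans hrhs)

theorem intervalIntegral.integral_nonneg_of_forall_Ioo {f : ℝ → ℝ} {a b : ℝ} (hab : a ≤ b)
    (hf : ∀ x ∈ Ioo a b, 0 ≤ f x) : 0 ≤ ∫ x in a..b, f x := by
  refine integral_nonneg_of_ae_restrict hab ?_
  rw [← Measure.restrict_congr_set Ioo_ae_eq_Icc]
  exact (ae_restrict_iff' measurableSet_Ioo).2 (.of_forall hf)

theorem intervalIntegrable_rpow_mul_sub_rpow {γ β t : ℝ} (hγ : 0 ≤ γ) (hβ : 0 < β) :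
    IntervalIntegrable (fun s => s ^ γ * (t - s) ^ (β - 1)) volume 0 t := by
  have hsing : IntervalIntegrable (fun s : ℝ => (t - s) ^ (β - 1)) volume 0 t := by
    simpa using ((intervalIntegral.intervalIntegrable_rpow' (a := 0) (b := t)
      (by linarith : -1 < β - 1)).comp_sub_left t).symm
  exact hsing.continuousOn_mul (continuous_rpow_const hγ).continuousOn

theorem integral_mul_le_of_le_rpow {g f : ℝ → ℝ} {β γ C D t : ℝ} (hβ : 0 < β) (hγ : 0 ≤ γ)
    (ht : 0 ≤ t) (hC : 0 ≤ C) (hD : 0 ≤ D)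
    (hg : ∀ s ∈ Ioo 0 t, 0 ≤ g s ∧ g s ≤ C * (t - s) ^ (β - 1))
    (hf : ∀ s ∈ Ioo 0 t, 0 ≤ f s ∧ f s ≤ D * s ^ γ) :
    ∫ s in (0:ℝ)..t, g s * f s ≤
      C * D * (Gamma (γ + 1) * Gamma β / Gamma (γ + 1 + β)) * t ^ (γ + β) := by
  have hrhs : 0 ≤ C * D * (Gamma (γ + 1) * Gamma β / Gamma (γ + 1 + β)) * t ^ (γ + β) := by
    have := Gamma_pos_of_pos hβ
    have := Gamma_pos_of_pos (by linarith : 0 < γ + 1)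
    have := Gamma_pos_of_pos (by linarith : 0 < γ + 1 + β)
    have := rpow_nonneg ht (γ + β)
    positivity
  rcases ht.eq_or_lt with rfl | ht
  · simpa using hrhs
  by_cases hint : IntervalIntegrable (fun s => g s * f s) volume 0 t
  swap
  · rwa [intervalIntegral.integral_undef hint]
  calc ∫ s in (0:ℝ)..t, g s * f s
      ≤ ∫ s in (0:ℝ)..t, C * D * (s ^ (γ + 1 - 1) * (t - s) ^ (β - 1)) := by
        refine intervalIntegral.integral_mono_on_of_le_Ioo ht.le hint ?_ fun s hs => ?_
        · simpa using (intervalIntegrable_rpow_mul_sub_rpow hγ hβ).const_mul (C * D)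
        obtain ⟨hg0, hgle⟩ := hg s hs
        obtain ⟨hf0, hfle⟩ := hf s hs
        rw [add_sub_cancel_right]
        calc g s * f s ≤ (C * (t - s) ^ (β - 1)) * (D * s ^ γ) :=
              mul_le_mul hgle hfle hf0 (hg0.trans hgle)
          _ = _ := by ring
    _ = _ := by
        rw [intervalIntegral.integral_const_mul,
          integral_rpow_mul_sub_rpow (by linarith) hβ ht, show γ + 1 + β - 1 = γ + β by ring]
        ring

theorem iterate_convolution_le (u : ℝ → ℝ) (v : ℕ → ℝ → ℝ) {C₁ C₂ β T : ℝ}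
    (hβ : 0 < β) (hC₁ : 0 ≤ C₁) (hC₂ : 0 < C₂)
    (hu0 : ∀ t ∈ Ioc (0:ℝ) T, 0 ≤ u t)
    (hub : ∀ t ∈ Ioc (0:ℝ) T, u t ≤ C₂ * t ^ (β - 1))
    (hU : ∀ t ∈ Icc (0:ℝ) T, (∫ s in (0:ℝ)..t, u s) ≤ C₁ * t ^ β)
    (hv0 : ∀ t : ℝ, v 0 t = 1)
    (hvs : ∀ (k : ℕ) (t : ℝ), v (k + 1) t = ∫ s in (0:ℝ)..t, u (t - s) * v k s)
    {k : ℕ} (hk : 1 ≤ k) :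
    ∀ t ∈ Icc (0:ℝ) T, 0 ≤ v k t ∧
      v k t ≤ C₁ * β / C₂ * (C₂ * Gamma β) ^ k / Gamma (β * k + 1) * t ^ (β * k) := by
  have hu_sub : ∀ t ∈ Icc (0:ℝ) T, ∀ s ∈ Ioo 0 t, t - s ∈ Ioc 0 T := fun t ht s hs =>
    ⟨by linarith [hs.2], by linarith [hs.1, ht.2]⟩
  induction k, hk using Nat.le_induction with
  | base =>
    intro t ht
    have hv1 : v 1 t = ∫ s in (0:ℝ)..t, u s := by
      simp [hvs, hv0, intervalIntegral.integral_comp_sub_left (fun s => u s) t]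
    have hconst : C₁ * β / C₂ * (C₂ * Gamma β) ^ 1 / Gamma (β * (1 : ℕ) + 1) = C₁ := by
      rw [Nat.cast_one, mul_one, Gamma_add_one hβ.ne', pow_one]
      have := Gamma_pos_of_pos hβ
      field_simp
    refine ⟨?_, ?_⟩
    · rw [hv1]
      exact intervalIntegral.integral_nonneg_of_forall_Ioo ht.1 fun s hs =>
        hu0 s ⟨hs.1, hs.2.le.trans ht.2⟩
    · rw [hv1, hconst, Nat.cast_one, mul_one]
      exact hU t ht
  | succ k _ ih =>
    intro t ht
    have hvk : ∀ s ∈ Ioo 0 t, 0 ≤ v k s ∧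
        v k s ≤ C₁ * β / C₂ * (C₂ * Gamma β) ^ k / Gamma (β * k + 1) * s ^ (β * k) :=
      fun s hs => ih s ⟨hs.1.le, hs.2.le.trans ht.2⟩
    have hu : ∀ s ∈ Ioo 0 t, 0 ≤ u (t - s) ∧ u (t - s) ≤ C₂ * (t - s) ^ (β - 1) :=
      fun s hs => ⟨hu0 _ (hu_sub t ht s hs), hub _ (hu_sub t ht s hs)⟩
    rw [hvs]
    refine ⟨intervalIntegral.integral_nonneg_of_forall_Ioo ht.1 fun s hs =>
      mul_nonneg (hu s hs).1 (hvk s hs).1, ?_⟩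
    have hΓ := Gamma_pos_of_pos hβ
    have hΓk : 0 < Gamma (β * k + 1) := Gamma_pos_of_pos (by positivity)
    refine (integral_mul_le_of_le_rpow hβ (by positivity) ht.1 hC₂.le (by positivity) hu
      hvk).trans_eq ?_
    rw [show β * ↑(k + 1) = β * k + β by push_cast; ring,
      show β * k + β + 1 = β * k + 1 + β by ring]
    field_simp
    ring

theorem tsum_le_add_mul_tsum_sub {a b : ℕ → ℝ} {c : ℝ} (hb : Summable b)
    (ha : ∀ k, 0 ≤ a (k + 1)) (hab : ∀ k, a (k + 1) ≤ c * b (k + 1)) :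
    ∑' k, a k ≤ a 0 + c * (∑' k, b k - b 0) := by
  have hb_tail : Summable fun k => c * b (k + 1) := ((summable_nat_add_iff 1).2 hb).mul_left c
  have ha_tail : Summable fun k => a (k + 1) := hb_tail.of_nonneg_of_le ha hab
  rw [((summable_nat_add_iff 1).1 ha_tail).tsum_eq_zero_add, hb.tsum_eq_zero_add,
    add_sub_cancel_left, ← tsum_mul_left]
  exact add_le_add_right (ha_tail.tsum_le_tsum hab hb_tail) _

theorem stmt10_general (u : ℝ → ℝ) (v : ℕ → ℝ → ℝ) (C₁ C₂ β T : ℝ)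
    (hβ : β ∈ Set.Ioo (0:ℝ) 1) (hC₁ : 0 < C₁) (hC₂ : 0 < C₂)
    (hu0 : ∀ t ∈ Set.Ioc (0:ℝ) T, 0 ≤ u t)
    (hub : ∀ t ∈ Set.Ioc (0:ℝ) T, u t ≤ C₂ * t ^ (β - 1))
    (hU : ∀ t ∈ Set.Icc (0:ℝ) T, (∫ s in (0:ℝ)..t, u s) ≤ C₁ * t ^ β)
    (hv0 : ∀ t : ℝ, v 0 t = 1)
    (hvs : ∀ (k : ℕ) (t : ℝ), v (k + 1) t = ∫ s in (0:ℝ)..t, u (t - s) * v k s) :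
    ∀ lam > (0:ℝ),
      (∃ M : ℕ → ℝ, Summable M ∧ ∀ k : ℕ, ∀ t ∈ Set.Icc (0:ℝ) T, |lam ^ k * v k t| ≤ M k)
      ∧ ∀ t ∈ Set.Icc (0:ℝ) T,
          ∑' k : ℕ, lam ^ k * v k t
            ≤ 1 + (C₁ * β / C₂) *
                ((∑' k : ℕ, (lam * C₂ * Real.Gamma β * t ^ β) ^ k /
                    Real.Gamma (β * (k : ℝ) + 1)) - 1) := by
  intro lam hlam
  have hβ0 := hβ.1
  have hc : 0 ≤ C₁ * β / C₂ := by positivity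
  have hterm : ∀ k : ℕ, ∀ t ∈ Icc 0 T, 0 ≤ lam ^ (k + 1) * v (k + 1) t ∧
      lam ^ (k + 1) * v (k + 1) t ≤
        C₁ * β / C₂ * mittagLefflerTerm β (lam * C₂ * Gamma β * t ^ β) (k + 1) := by
    intro k t ht
    obtain ⟨h0, hle⟩ :=
      iterate_convolution_le u v hβ0 hC₁.le hC₂ hu0 hub hU hv0 hvs (Nat.le_add_left 1 k) t ht
    refine ⟨by positivity, ?_⟩
    simpa only [mul_assoc] using pow_mul_le_mul_mittagLefflerTerm hlam.le ht.1 hle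
  refine ⟨⟨fun k => (1 + C₁ * β / C₂) * mittagLefflerTerm β (lam * C₂ * Gamma β * T ^ β) k,
    (summable_mittagLefflerTerm hβ0 _).mul_left _, ?_⟩, fun t ht => ?_⟩
  · rintro (_ | k) t ht
    · simp [hv0, mittagLefflerTerm, hc]
    · rw [abs_of_nonneg (hterm k t ht).1]
      have hz : 0 ≤ lam * C₂ * Gamma β * t ^ β := by have := rpow_nonneg ht.1 β; positivity
      have hzZ : lam * C₂ * Gamma β * t ^ β ≤ lam * C₂ * Gamma β * T ^ β := by
        gcongr; exacts [ht.1, ht.2]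
      refine (hterm k t ht).2.trans (mul_le_mul (by linarith) (mittagLefflerTerm_mono hβ0.le
        hz hzZ _) ?_ (by linarith))
      unfold mittagLefflerTerm
      positivity
  · refine (tsum_le_add_mul_tsum_sub (summable_mittagLefflerTerm hβ0 _)
      (fun k => (hterm k t ht).1) (fun k => (hterm k t ht).2)).trans_eq ?_
    simp [hv0, mittagLefflerTerm]

/-- Lemma 4.2: normal convergence on `[0,T]` of the series `Σ λ^k u_k^*(t)`,
with a Mittag-Leffler bound. -/
theorem stmt10 (u : ℝ → ℝ) (v : ℕ → ℝ → ℝ) (C₁ C₂ β T : ℝ)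
    (hβ : β ∈ Set.Ioo (0:ℝ) 1) (hC₁ : 0 < C₁) (hC₂ : 0 < C₂) (hT : 0 < T)
    (humeas : Measurable u)
    (hu0 : ∀ t ∈ Set.Ioc (0:ℝ) T, 0 ≤ u t)
    (hub : ∀ t ∈ Set.Ioc (0:ℝ) T, u t ≤ C₂ * t ^ (β - 1))
    (hU : ∀ t ∈ Set.Icc (0:ℝ) T, (∫ s in (0:ℝ)..t, u s) ≤ C₁ * t ^ β)
    (hv0 : ∀ t : ℝ, v 0 t = 1)
    (hvs : ∀ (k : ℕ) (t : ℝ), v (k + 1) t = ∫ s in (0:ℝ)..t, u (t - s) * v k s) :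
    ∀ lam > (0:ℝ),
      (∃ M : ℕ → ℝ, Summable M ∧ ∀ k : ℕ, ∀ t ∈ Set.Icc (0:ℝ) T, |lam ^ k * v k t| ≤ M k)
      ∧ ∀ t ∈ Set.Icc (0:ℝ) T,
          ∑' k : ℕ, lam ^ k * v k t
            ≤ 1 + (C₁ * β / C₂) *
                ((∑' k : ℕ, (lam * C₂ * Real.Gamma β * t ^ β) ^ k /
                    Real.Gamma (β * (k : ℝ) + 1)) - 1) :=
  stmt10_general u v C₁ C₂ β T hβ hC₁ hC₂ hu0 hub hU hv0 hvs
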